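/- arXiv:2509.23202 — 3 statements merged into one kernel-verified Lean document; each statement's English description precedes it below -/
import Mathlib

section
/- Let Z₁,…,Z_G be i.i.d. Exponential(λ) with λ > 0, and let M = max_i Z_i. For fixed δ ∈ (0,1/2), the preserved mass R_L(G) := E[Z₁² · 1{Z₁ ≥ δM}] satisfies R_L(G) = Θ((log G)² · G^{−δ}) as G → ∞. -/
/-!
Since `δ > 0`, the event `{Z₀ ≥ δ M}` is `{δ Zᵢ ≤ Z₀ for all i < G}`.

Lower bound: with `L = log G`, the event contains `{Z₀ > δL/l} ∩ {Zᵢ ≤ L/l for 1 ≤ i < G}`, where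
`Z₀² ≥ (δL/l)²`. By independence this has probability `G^{-δ} (1 - 1/G)^{G-1} ≥ G^{-δ}/e`.

Upper bound: cut according to `Z₀ ∈ (k, k+1]`. On the `k`-th slice every `Zᵢ` is at most
`(k+1)/δ`. Below `K = ⌈δL/l⌉`, the bound `(1 - x)ⁿ ≤ 1/(nx)` turns the slice contributions into a
geometric series with ratio `e^{l/δ - l} > 1`, dominated by its last term `≈ K² G^{-δ}`. Above `K`,
the tail `∑ (k+1)² e^{-lk}` is `O(K² e^{-lK}) = O(K² G^{-δ})`.
-/

open MeasureTheory ProbabilityTheory Real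

lemma exp_neg_le_inv {w : ℝ} (hw : 0 < w) : exp (-w) ≤ w⁻¹ := by
  rw [exp_neg]
  exact inv_anti₀ hw ((lt_add_one w).le.trans (add_one_le_exp w))

lemma one_sub_pow_le_inv_mul {x : ℝ} {n : ℕ} (hx : x ≤ 1) (hnx : 0 < n * x) :
    (1 - x) ^ n ≤ (n * x)⁻¹ :=
  calc (1 - x) ^ n ≤ exp (-x) ^ n := pow_le_pow_left₀ (by linarith) (one_sub_le_exp_neg x) n
    _ = exp (-(n * x)) := by rw [← exp_nat_mul]; ring_nf
    _ ≤ (n * x)⁻¹ := exp_neg_le_inv hnx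

lemma exp_neg_one_le_one_sub_inv_pow (n : ℕ) : exp (-1) ≤ (1 - ((n : ℝ) + 1)⁻¹) ^ n := by
  rcases Nat.eq_zero_or_pos n with rfl | hn
  · simp
  have hbase : 1 - ((n : ℝ) + 1)⁻¹ = (1 + (n : ℝ)⁻¹)⁻¹ := by
    have : (n : ℝ) ≠ 0 := by positivity
    field_simp
    ring
  rw [hbase, inv_pow, exp_neg]
  exact inv_anti₀ (by positivity) one_add_inv_pow_le_exp

lemma summable_add_one_sq_mul_exp_neg {l : ℝ} (hl : 0 < l) :
    Summable fun k : ℕ ↦ ((k : ℝ) + 1) ^ 2 * exp (-l * k) := by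
  have h := ((summable_nat_add_iff 1).mpr (summable_pow_mul_exp_neg_nat_mul 2 hl)).mul_left (exp l)
  refine h.congr fun k ↦ ?_
  push_cast
  rw [mul_left_comm, ← exp_add]
  ring_nf

lemma mul_log_sq_mul_rpow_neg_le {l : ℝ} (δ : ℝ) (hl : 0 < l) {G : ℕ} (hG : 1 ≤ G) :
    δ ^ 2 / l ^ 2 * exp (-1) * (log G ^ 2 * (G : ℝ) ^ (-δ)) ≤
      (δ * log G / l) ^ 2 * exp (-l * (δ * log G / l)) *
        (1 - exp (-l * (log G / l))) ^ (G - 1) := by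
  have hG₀ : (0 : ℝ) < G := Nat.cast_pos.mpr hG
  have ha : exp (-l * (δ * log G / l)) = (G : ℝ) ^ (-δ) := by
    rw [rpow_def_of_pos hG₀]
    congr 1
    field_simp
  have hb : exp (-l * (log G / l)) = (((G - 1 : ℕ) : ℝ) + 1)⁻¹ := by
    rw [Nat.cast_sub hG, Nat.cast_one, sub_add_cancel, ← exp_log hG₀, ← exp_neg, log_exp]
    congr 1
    field_simp
  rw [ha, hb]
  calc δ ^ 2 / l ^ 2 * exp (-1) * (log G ^ 2 * (G : ℝ) ^ (-δ))
      = (δ * log G / l) ^ 2 * (G : ℝ) ^ (-δ) * exp (-1) := by ring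
    _ ≤ _ := mul_le_mul_of_nonneg_left (exp_neg_one_le_one_sub_inv_pow (G - 1)) (by positivity)

namespace Finset

lemma mul_sup'_le_iff {ι : Type*} {s : Finset ι} (hs : s.Nonempty) {f : ι → ℝ} {δ c : ℝ}
    (hδ : 0 ≤ δ) : δ * s.sup' hs f ≤ c ↔ ∀ i ∈ s, δ * f i ≤ c := by
  refine ⟨fun h i hi ↦ (mul_le_mul_of_nonneg_left (le_sup' f hi) hδ).trans h, fun h ↦ ?_⟩
  obtain ⟨i, hi, hmax⟩ := exists_mem_eq_sup' hs f
  exact hmax ▸ h i hi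

end Finset

section ExponentialLaw

variable {Ω : Type*} [MeasurableSpace Ω]

def ExpCDF (μ : Measure Ω) (X : Ω → ℝ) (l : ℝ) : Prop :=
  ∀ z : ℝ, 0 ≤ z → μ {ω | X ω ≤ z} = ENNReal.ofReal (1 - exp (-l * z))

variable {μ : Measure Ω} {X : Ω → ℝ} {l : ℝ}

lemma one_sub_exp_neg_mul_nonneg (hl : 0 ≤ l) {z : ℝ} (hz : 0 ≤ z) : 0 ≤ 1 - exp (-l * z) := by
  rw [sub_nonneg, exp_le_one_iff]
  nlinarith

lemma ExpCDF.measure_nonpos (hX : ExpCDF μ X l) : μ {ω | X ω ≤ 0} = 0 := by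
  simpa using hX 0 le_rfl

lemma ExpCDF.measure_preimage_Ioi [IsProbabilityMeasure μ] (hX : ExpCDF μ X l) (hXm : Measurable X)
    (hl : 0 ≤ l) {a : ℝ} (ha : 0 ≤ a) : μ (X ⁻¹' Set.Ioi a) = ENNReal.ofReal (exp (-l * a)) := by
  have hcompl : X ⁻¹' Set.Ioi a = {ω | X ω ≤ a}ᶜ := by ext; simp
  rw [hcompl, prob_compl_eq_one_sub (measurableSet_le hXm measurable_const), hX a ha,
    ← ENNReal.ofReal_one, ← ENNReal.ofReal_sub _ (one_sub_exp_neg_mul_nonneg hl ha), sub_sub_cancel]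

lemma ProbabilityTheory.iIndepFun.measure_preimage_inter_biInter_preimage {ι : Type*}
    [DecidableEq ι] {Z : ι → Ω → ℝ} (hindep : iIndepFun Z μ) {j : ι} {s : Finset ι} (hj : j ∉ s)
    {S T : Set ℝ} (hS : MeasurableSet S) (hT : MeasurableSet T) :
    μ (Z j ⁻¹' S ∩ ⋂ i ∈ s, Z i ⁻¹' T) = μ (Z j ⁻¹' S) * ∏ i ∈ s, μ (Z i ⁻¹' T) := by
  have h := hindep.measure_inter_preimage_eq_mul (insert j s)
    (sets := fun i ↦ if i = j then S else T) (fun i _ ↦ by split_ifs <;> assumption)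
  have hs : ∀ i ∈ s, (if i = j then S else T) = T :=
    fun i hi ↦ if_neg (ne_of_mem_of_not_mem hi hj)
  rwa [Finset.set_biInter_insert, Finset.prod_insert hj, if_pos rfl,
    Set.iInter₂_congr fun i hi ↦ by rw [hs i hi],
    Finset.prod_congr rfl fun i hi ↦ by rw [hs i hi]] at h

end ExponentialLaw

section SliceBound

variable {l δ : ℝ}

/-- Bound on the contribution of the slice `Z₀ ∈ (k, k+1]`: `Z₀² ≤ (k+1)²`, `P(Z₀ > k) = e^{-lk}`,
and each of the other `G - 1` variables must be at most `(k+1)/δ`. -/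
noncomputable def sliceBound (l δ : ℝ) (G k : ℕ) : ℝ :=
  ((k : ℝ) + 1) ^ 2 * exp (-l * k) * (1 - exp (-l * ((k + 1) / δ))) ^ (G - 1)

lemma sliceBound_nonneg (hl : 0 ≤ l) (hδ : 0 ≤ δ) (G k : ℕ) : 0 ≤ sliceBound l δ G k :=
  mul_nonneg (by positivity) (pow_nonneg (one_sub_exp_neg_mul_nonneg hl (by positivity)) _)

lemma sliceBound_le (hl : 0 ≤ l) (hδ : 0 ≤ δ) (G k : ℕ) :
    sliceBound l δ G k ≤ ((k : ℝ) + 1) ^ 2 * exp (-l * k) :=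
  mul_le_of_le_one_right (by positivity) <| pow_le_one₀
    (one_sub_exp_neg_mul_nonneg hl (by positivity)) (by linarith [exp_pos (-l * ((k + 1) / δ))])

lemma summable_sliceBound (hl : 0 < l) (hδ : 0 ≤ δ) (G : ℕ) : Summable (sliceBound l δ G) :=
  (summable_add_one_sq_mul_exp_neg hl).of_nonneg_of_le (sliceBound_nonneg hl.le hδ G)
    (sliceBound_le hl.le hδ G)

lemma sliceBound_le_geometric (hl : 0 ≤ l) (hδ : 0 < δ) {G : ℕ} (hG : 2 ≤ G) (k : ℕ) :
    sliceBound l δ G k ≤ ((k : ℝ) + 1) ^ 2 * exp (l / δ) / (G - 1) * exp (l / δ - l) ^ k := by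
  set x := exp (-l * ((k + 1) / δ))
  have hcast : ((G - 1 : ℕ) : ℝ) = G - 1 := by rw [Nat.cast_sub (by omega), Nat.cast_one]
  have hG1 : (0 : ℝ) < G - 1 := by rw [← hcast]; exact Nat.cast_pos.mpr (by omega)
  have hpow : (1 - x) ^ (G - 1) ≤ (((G - 1 : ℕ) : ℝ) * x)⁻¹ :=
    one_sub_pow_le_inv_mul (sub_nonneg.mp (one_sub_exp_neg_mul_nonneg hl (by positivity)))
      (by rw [hcast]; positivity)
  have hexp : exp (-l * k) * x⁻¹ = exp (l / δ) * exp (l / δ - l) ^ k := by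
    rw [← exp_neg, ← exp_add, ← exp_nat_mul, ← exp_add]
    congr 1
    field_simp
    ring
  calc sliceBound l δ G k ≤ ((k : ℝ) + 1) ^ 2 * exp (-l * k) * (((G - 1 : ℕ) : ℝ) * x)⁻¹ :=
        mul_le_mul_of_nonneg_left hpow (by positivity)
    _ = ((k : ℝ) + 1) ^ 2 / (G - 1) * (exp (-l * k) * x⁻¹) := by rw [hcast, mul_inv]; ring
    _ = _ := by rw [hexp]; ring

lemma one_lt_exp_div_sub (hl : 0 < l) (hδ : 0 < δ) (hδ₁ : δ < 1) : 1 < exp (l / δ - l) :=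
  one_lt_exp_iff.mpr (by rw [sub_pos, lt_div_iff₀ hδ]; nlinarith)

lemma sum_range_sliceBound_le (hl : 0 < l) (hδ : 0 < δ) (hδ₁ : δ < 1) {G : ℕ} (hG : 2 ≤ G)
    (K : ℕ) : ∑ k ∈ Finset.range K, sliceBound l δ G k ≤
      (K : ℝ) ^ 2 * exp (l / δ) / (G - 1) * (exp (l / δ - l) ^ K / (exp (l / δ - l) - 1)) := by
  set ρ := exp (l / δ - l)
  have hρ : 1 < ρ := one_lt_exp_div_sub hl hδ hδ₁
  have hG1 : (0 : ℝ) < G - 1 := by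
    have : (2 : ℝ) ≤ G := by exact_mod_cast hG
    linarith
  calc ∑ k ∈ Finset.range K, sliceBound l δ G k
      ≤ ∑ k ∈ Finset.range K, (K : ℝ) ^ 2 * exp (l / δ) / (G - 1) * ρ ^ k := by
        refine Finset.sum_le_sum fun k hk ↦ (sliceBound_le_geometric hl.le hδ hG k).trans ?_
        have hk : (k : ℝ) + 1 ≤ K := by exact_mod_cast Finset.mem_range.mp hk
        gcongr
    _ = (K : ℝ) ^ 2 * exp (l / δ) / (G - 1) * ((ρ ^ K - 1) / (ρ - 1)) := by
        rw [← Finset.mul_sum, geom_sum_eq hρ.ne']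
    _ ≤ _ := by
        gcongr
        linarith

lemma tsum_sliceBound_nat_add_le (hl : 0 < l) (hδ : 0 ≤ δ) (G K : ℕ) :
    ∑' j, sliceBound l δ G (j + K) ≤
      ((K : ℝ) + 1) ^ 2 * exp (-l * K) * ∑' j : ℕ, ((j : ℝ) + 1) ^ 2 * exp (-l * j) := by
  rw [← tsum_mul_left]
  refine Summable.tsum_le_tsum (fun j ↦ (sliceBound_le hl.le hδ G _).trans ?_)
    ((summable_nat_add_iff K).mpr (summable_sliceBound hl hδ G))
    ((summable_add_one_sq_mul_exp_neg hl).mul_left _)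
  have hsplit : ((j + K : ℕ) : ℝ) + 1 ≤ ((K : ℝ) + 1) * ((j : ℝ) + 1) := by
    push_cast
    nlinarith [j.cast_nonneg (α := ℝ), K.cast_nonneg (α := ℝ)]
  have hexp : exp (-l * ((j + K : ℕ) : ℝ)) = exp (-l * K) * exp (-l * j) := by
    rw [← exp_add]; push_cast; ring_nf
  calc ((j + K : ℕ) + 1 : ℝ) ^ 2 * exp (-l * ((j + K : ℕ) : ℝ))
      ≤ (((K : ℝ) + 1) * ((j : ℝ) + 1)) ^ 2 * (exp (-l * K) * exp (-l * j)) := by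
        rw [← hexp]; gcongr
    _ = _ := by ring

lemma tsum_sliceBound_le (hl : 0 < l) (hδ : 0 < δ) (hδ₁ : δ < 1) {G : ℕ} (hG : 2 ≤ G) (K : ℕ) :
    ∑' k, sliceBound l δ G k ≤ ((K : ℝ) + 1) ^ 2 *
      (exp (l / δ) / (G - 1) * (exp (l / δ - l) ^ K / (exp (l / δ - l) - 1)) +
        exp (-l * K) * ∑' j : ℕ, ((j : ℝ) + 1) ^ 2 * exp (-l * j)) := by
  set A := exp (l / δ) / (G - 1) * (exp (l / δ - l) ^ K / (exp (l / δ - l) - 1))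
  have hA : 0 ≤ A := by
    have : (2 : ℝ) ≤ G := by exact_mod_cast hG
    have : 0 < exp (l / δ - l) - 1 := by linarith [one_lt_exp_div_sub hl hδ hδ₁]
    exact mul_nonneg (div_nonneg (exp_pos _).le (by linarith)) (by positivity)
  have hK : (K : ℝ) ^ 2 * A ≤ ((K : ℝ) + 1) ^ 2 * A := by gcongr; linarith
  rw [← (summable_sliceBound hl hδ.le G).sum_add_tsum_nat_add K, mul_add]
  exact add_le_add ((sum_range_sliceBound_le hl hδ hδ₁ hG K).trans (le_of_eq_of_le (by ring) hK))
    ((tsum_sliceBound_nat_add_le hl hδ.le G K).trans_eq (mul_assoc _ _ _))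

lemma geometric_head_le_rpow_neg (hl : 0 < l) (hδ : 0 < δ) (hδ₁ : δ < 1) {G K : ℕ} (hG : 2 ≤ G)
    (hK : (K : ℝ) < δ / l * log G + 1) :
    exp (l / δ) / (G - 1) * (exp (l / δ - l) ^ K / (exp (l / δ - l) - 1)) ≤
      2 * exp (l / δ) * exp (l / δ - l) / (exp (l / δ - l) - 1) * (G : ℝ) ^ (-δ) := by
  set ρ := exp (l / δ - l)
  have hρ : 0 < ρ - 1 := by linarith [one_lt_exp_div_sub hl hδ hδ₁]
  have hG₂ : (2 : ℝ) ≤ G := by exact_mod_cast hG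
  have hG₀ : (0 : ℝ) < G := by linarith
  have hG₁ : (0 : ℝ) < G - 1 := by linarith
  have hρK : ρ ^ K ≤ ρ * G * (G : ℝ) ^ (-δ) := by
    have hρ' : 0 < l / δ - l := one_lt_exp_iff.mp (one_lt_exp_div_sub hl hδ hδ₁)
    have hexp : (δ / l * log G + 1) * (l / δ - l) = (l / δ - l) + log G + log G * -δ := by
      field_simp
      ring
    calc ρ ^ K = exp (K * (l / δ - l)) := (exp_nat_mul _ _).symm
      _ ≤ exp ((δ / l * log G + 1) * (l / δ - l)) :=
          exp_le_exp.mpr (mul_le_mul_of_nonneg_right hK.le hρ'.le)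
      _ = ρ * G * (G : ℝ) ^ (-δ) := by
          rw [hexp, exp_add, exp_add, exp_log hG₀, rpow_def_of_pos hG₀]
  calc exp (l / δ) / (G - 1) * (ρ ^ K / (ρ - 1))
      ≤ exp (l / δ) / (G - 1) * (ρ * G * (G : ℝ) ^ (-δ) / (ρ - 1)) :=
        mul_le_mul_of_nonneg_left (div_le_div_of_nonneg_right hρK hρ.le)
          (div_nonneg (exp_pos _).le hG₁.le)
    _ = exp (l / δ) * ρ / (ρ - 1) * (G : ℝ) ^ (-δ) * (G / (G - 1)) := by ring
    _ ≤ exp (l / δ) * ρ / (ρ - 1) * (G : ℝ) ^ (-δ) * 2 := by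
        gcongr
        rw [div_le_iff₀ hG₁]
        linarith
    _ = _ := by ring

lemma exists_tsum_sliceBound_le (hl : 0 < l) (hδ : 0 < δ) (hδ₁ : δ < 1) :
    ∃ C, 0 < C ∧ ∀ G : ℕ, 3 ≤ G →
      ∑' k, sliceBound l δ G k ≤ C * (log G ^ 2 * (G : ℝ) ^ (-δ)) := by
  set ρ := exp (l / δ - l)
  set T := ∑' j : ℕ, ((j : ℝ) + 1) ^ 2 * exp (-l * j)
  have hρ : 0 < ρ - 1 := by linarith [one_lt_exp_div_sub hl hδ hδ₁]
  have hT : 0 ≤ T := tsum_nonneg fun j ↦ by positivity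
  refine ⟨(δ / l + 2) ^ 2 * (2 * exp (l / δ) * ρ / (ρ - 1) + T),
    mul_pos (by positivity) (add_pos_of_pos_of_nonneg (by positivity) hT), fun G hG ↦ ?_⟩
  have hG₃ : (3 : ℝ) ≤ G := by exact_mod_cast hG
  have hG₀ : (0 : ℝ) < G := by linarith
  set L := log G
  have hL : 1 ≤ L := by
    rw [le_log_iff_exp_le hG₀]
    linarith [exp_one_lt_d9]
  have hGδ : (G : ℝ) ^ (-δ) = exp (-δ * L) := by rw [rpow_def_of_pos hG₀, mul_comm]
  set K := ⌈δ * L / l⌉₊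
  have hK₁ : δ * L ≤ l * K := by
    have := Nat.le_ceil (δ * L / l)
    rw [div_le_iff₀ hl] at this
    linarith
  have hK₂ : (K : ℝ) < δ / l * L + 1 := by
    rw [div_mul_eq_mul_div]
    exact Nat.ceil_lt_add_one (by positivity)
  have hKL : (K : ℝ) + 1 ≤ (δ / l + 2) * L := by nlinarith
  have htail : exp (-l * K) ≤ (G : ℝ) ^ (-δ) := by
    rw [hGδ]
    exact exp_le_exp.mpr (by linarith)
  have hhead := geometric_head_le_rpow_neg hl hδ hδ₁ (by omega) hK₂
  calc ∑' k, sliceBound l δ G k ≤ ((K : ℝ) + 1) ^ 2 *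
        (exp (l / δ) / (G - 1) * (ρ ^ K / (ρ - 1)) + exp (-l * K) * T) :=
        tsum_sliceBound_le hl hδ hδ₁ (by omega) K
    _ ≤ ((δ / l + 2) * L) ^ 2 *
          (2 * exp (l / δ) * ρ / (ρ - 1) * (G : ℝ) ^ (-δ) + (G : ℝ) ^ (-δ) * T) := by
        gcongr
        exact add_nonneg (mul_nonneg (div_nonneg (exp_pos _).le (by linarith)) (by positivity))
          (mul_nonneg (exp_pos _).le hT)
    _ = _ := by ring

end SliceBound

section IIDExponential

variable {Ω : Type*} [MeasurableSpace Ω] {μ : Measure Ω} {Z : ℕ → Ω → ℝ} {l δ : ℝ}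

lemma measure_preimage_inter_biInter_Iic (hindep : iIndepFun Z μ) (hcdf : ∀ i, ExpCDF μ (Z i) l)
    {S : Set ℝ} (hS : MeasurableSet S) {b : ℝ} (hb : 0 ≤ b) (G : ℕ) :
    μ (Z 0 ⁻¹' S ∩ ⋂ i ∈ Finset.Ico 1 G, Z i ⁻¹' Set.Iic b) =
      μ (Z 0 ⁻¹' S) * ENNReal.ofReal (1 - exp (-l * b)) ^ (G - 1) := by
  rw [hindep.measure_preimage_inter_biInter_preimage (by simp) hS measurableSet_Iic,
    Finset.prod_eq_pow_card (f := fun i ↦ μ (Z i ⁻¹' Set.Iic b)) fun i _ ↦ hcdf i b hb,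
    Nat.card_Ico]

variable [IsProbabilityMeasure μ]

lemma setLIntegral_slice_le (hindep : iIndepFun Z μ) (hcdf : ∀ i, ExpCDF μ (Z i) l)
    (hZ₀ : Measurable (Z 0)) (hl : 0 ≤ l) (hδ : 0 ≤ δ) (G k : ℕ) :
    ∫⁻ ω in Z 0 ⁻¹' Set.Ioc (k : ℝ) (k + 1) ∩ ⋂ i ∈ Finset.Ico 1 G, Z i ⁻¹' Set.Iic ((k + 1) / δ),
      ENNReal.ofReal (Z 0 ω ^ 2) ∂μ ≤ ENNReal.ofReal (sliceBound l δ G k) := by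
  have hb : (0 : ℝ) ≤ (k + 1) / δ := by positivity
  calc _ ≤ ∫⁻ _ in Z 0 ⁻¹' Set.Ioc (k : ℝ) (k + 1) ∩ ⋂ i ∈ Finset.Ico 1 G,
          Z i ⁻¹' Set.Iic ((k + 1) / δ), ENNReal.ofReal (((k : ℝ) + 1) ^ 2) ∂μ :=
        setLIntegral_mono measurable_const fun ω hω ↦ ENNReal.ofReal_le_ofReal <|
          pow_le_pow_left₀ (by linarith [hω.1.1, k.cast_nonneg (α := ℝ)]) hω.1.2 2
    _ ≤ ENNReal.ofReal (((k : ℝ) + 1) ^ 2) * (μ (Z 0 ⁻¹' Set.Ioi (k : ℝ)) *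
          ENNReal.ofReal (1 - exp (-l * ((k + 1) / δ))) ^ (G - 1)) := by
        rw [setLIntegral_const,
          ← measure_preimage_inter_biInter_Iic hindep hcdf measurableSet_Ioi hb]
        gcongr
        exact Set.preimage_mono Set.Ioc_subset_Ioi_self
    _ = ENNReal.ofReal (sliceBound l δ G k) := by
        rw [(hcdf 0).measure_preimage_Ioi hZ₀ hl k.cast_nonneg,
          ← ENNReal.ofReal_pow (one_sub_exp_neg_mul_nonneg hl hb),
          ← ENNReal.ofReal_mul (by positivity), ← ENNReal.ofReal_mul (by positivity), sliceBound,
          mul_assoc]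

lemma setLIntegral_preserved_le_tsum (hindep : iIndepFun Z μ) (hcdf : ∀ i, ExpCDF μ (Z i) l)
    (hZ₀ : Measurable (Z 0)) (hl : 0 < l) (hδ : 0 < δ) (G : ℕ) :
    ∫⁻ ω in {ω | ∀ i ∈ Finset.range G, δ * Z i ω ≤ Z 0 ω}, ENNReal.ofReal (Z 0 ω ^ 2) ∂μ ≤
      ENNReal.ofReal (∑' k, sliceBound l δ G k) := by
  set A : ℕ → Set Ω := fun k ↦
    Z 0 ⁻¹' Set.Ioc (k : ℝ) (k + 1) ∩ ⋂ i ∈ Finset.Ico 1 G, Z i ⁻¹' Set.Iic ((k + 1) / δ)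
  have hcover : {ω | ∀ i ∈ Finset.range G, δ * Z i ω ≤ Z 0 ω} ⊆ {ω | Z 0 ω ≤ 0} ∪ ⋃ k, A k := by
    intro ω hω
    rcases le_or_gt (Z 0 ω) 0 with hneg | hpos
    · exact Or.inl hneg
    have hceil : ⌈Z 0 ω⌉₊ ≠ 0 := (Nat.ceil_pos.mpr hpos).ne'
    obtain ⟨hlt, hle⟩ := (Nat.ceil_eq_iff hceil).mp rfl
    have hk : ((⌈Z 0 ω⌉₊ - 1 : ℕ) : ℝ) + 1 = ⌈Z 0 ω⌉₊ := by
      rw [Nat.cast_sub (Nat.one_le_iff_ne_zero.mpr hceil)]; ring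
    refine Or.inr (Set.mem_iUnion.mpr
      ⟨⌈Z 0 ω⌉₊ - 1, ⟨hlt, hk ▸ hle⟩, Set.mem_iInter₂.mpr fun i hi ↦ ?_⟩)
    have hi' : i ∈ Finset.range G := Finset.mem_range.mpr (Finset.mem_Ico.mp hi).2
    rw [Set.mem_preimage, Set.mem_Iic, le_div_iff₀ hδ, hk]
    linarith [hω i hi']
  calc _ ≤ ∫⁻ ω in {ω | Z 0 ω ≤ 0} ∪ ⋃ k, A k, ENNReal.ofReal (Z 0 ω ^ 2) ∂μ :=
        lintegral_mono_set hcover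
    _ ≤ 0 + ∑' k, ∫⁻ ω in A k, ENNReal.ofReal (Z 0 ω ^ 2) ∂μ :=
        (lintegral_union_le _ _ _).trans <| add_le_add
          (setLIntegral_measure_zero _ _ (hcdf 0).measure_nonpos).le (lintegral_iUnion_le _ _)
    _ ≤ ∑' k, ENNReal.ofReal (sliceBound l δ G k) := by
        rw [zero_add]
        exact ENNReal.tsum_le_tsum fun k ↦ setLIntegral_slice_le hindep hcdf hZ₀ hl.le hδ.le G k
    _ = ENNReal.ofReal (∑' k, sliceBound l δ G k) :=
        (ENNReal.ofReal_tsum_of_nonneg (sliceBound_nonneg hl.le hδ.le G)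
          (summable_sliceBound hl hδ.le G)).symm

lemma ofReal_le_setLIntegral_preserved (hindep : iIndepFun Z μ) (hcdf : ∀ i, ExpCDF μ (Z i) l)
    (hZ₀ : Measurable (Z 0)) (hl : 0 ≤ l) (hδ : 0 ≤ δ) (hδ₁ : δ ≤ 1) {a b : ℝ} (ha : 0 ≤ a)
    (hb : 0 ≤ b) (hab : δ * b ≤ a) (G : ℕ) :
    ENNReal.ofReal (a ^ 2 * exp (-l * a) * (1 - exp (-l * b)) ^ (G - 1)) ≤
      ∫⁻ ω in {ω | ∀ i ∈ Finset.range G, δ * Z i ω ≤ Z 0 ω}, ENNReal.ofReal (Z 0 ω ^ 2) ∂μ := by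
  set D := Z 0 ⁻¹' Set.Ioi a ∩ ⋂ i ∈ Finset.Ico 1 G, Z i ⁻¹' Set.Iic b
  have hDE : D ⊆ {ω | ∀ i ∈ Finset.range G, δ * Z i ω ≤ Z 0 ω} := by
    rintro ω ⟨h₀, hrest⟩ i hi
    have h₀ : a < Z 0 ω := h₀
    rcases Nat.eq_zero_or_pos i with rfl | hipos
    · nlinarith
    · have hi : Z i ω ≤ b :=
        Set.mem_iInter₂.mp hrest i (Finset.mem_Ico.mpr ⟨hipos, Finset.mem_range.mp hi⟩)
      nlinarith
  calc ENNReal.ofReal (a ^ 2 * exp (-l * a) * (1 - exp (-l * b)) ^ (G - 1))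
      = ∫⁻ _ in D, ENNReal.ofReal (a ^ 2) ∂μ := by
        rw [setLIntegral_const, measure_preimage_inter_biInter_Iic hindep hcdf measurableSet_Ioi hb,
          (hcdf 0).measure_preimage_Ioi hZ₀ hl ha,
          ← ENNReal.ofReal_pow (one_sub_exp_neg_mul_nonneg hl hb),
          ← ENNReal.ofReal_mul (by positivity), ← ENNReal.ofReal_mul (by positivity), mul_assoc]
    _ ≤ ∫⁻ ω in D, ENNReal.ofReal (Z 0 ω ^ 2) ∂μ :=
        setLIntegral_mono (hZ₀.pow_const 2).ennreal_ofReal fun ω hω ↦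
          ENNReal.ofReal_le_ofReal (pow_le_pow_left₀ ha (le_of_lt hω.1) 2)
    _ ≤ _ := lintegral_mono_set hDE

end IIDExponential

/-- Laplace-model preserved mass: for i.i.d. Exponential(λ) magnitudes,
`E[Z₁² · 1{Z₁ ≥ δ M}] = Θ((log G)² G^{-δ})` as `G → ∞`. -/
theorem stmt_3 {Ω : Type*} [MeasurableSpace Ω] (μ : Measure Ω) [IsProbabilityMeasure μ]
    (Z : ℕ → Ω → ℝ) (l δ : ℝ) (hl : 0 < l) (hδ : δ ∈ Set.Ioo (0 : ℝ) (1 / 2))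
    (hmeas : ∀ i, Measurable (Z i))
    (hindep : iIndepFun Z μ)
    (hcdf : ∀ i, ∀ z : ℝ, 0 ≤ z →
      μ {ω | Z i ω ≤ z} = ENNReal.ofReal (1 - Real.exp (-l * z))) :
    ∃ c C : ℝ, 0 < c ∧ 0 < C ∧ ∃ G₀ : ℕ, ∀ G : ℕ, ∀ hG : G₀ + 1 ≤ G,
      c * ((Real.log G) ^ 2 * (G : ℝ) ^ (-δ)) ≤
        (∫ ω in {ω | δ * (Finset.range G).sup'
            (Finset.nonempty_range_iff.mpr (by omega)) (fun i => Z i ω) ≤ Z 0 ω},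
          (Z 0 ω) ^ 2 ∂μ) ∧
      (∫ ω in {ω | δ * (Finset.range G).sup'
            (Finset.nonempty_range_iff.mpr (by omega)) (fun i => Z i ω) ≤ Z 0 ω},
          (Z 0 ω) ^ 2 ∂μ) ≤
        C * ((Real.log G) ^ 2 * (G : ℝ) ^ (-δ)) := by
  obtain ⟨hδ₀, hδ₁⟩ := hδ
  obtain ⟨C, hC, hupper⟩ := exists_tsum_sliceBound_le hl hδ₀ (by linarith)
  refine ⟨δ ^ 2 / l ^ 2 * exp (-1), C, by positivity, hC, 2, fun G hG ↦ ?_⟩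
  simp only [Finset.mul_sup'_le_iff _ hδ₀.le]
  rw [integral_eq_lintegral_of_nonneg_ae (ae_of_all _ fun ω ↦ sq_nonneg _)
    ((hmeas 0).pow_const 2).aestronglyMeasurable]
  have hU := (setLIntegral_preserved_le_tsum hindep hcdf (hmeas 0) hl hδ₀ G).trans
    (ENNReal.ofReal_le_ofReal (hupper G (by omega)))
  have hL := (ENNReal.ofReal_le_ofReal (mul_log_sq_mul_rpow_neg_le δ hl (by omega))).trans
    (ofReal_le_setLIntegral_preserved hindep hcdf (hmeas 0) hl.le hδ₀.le (by linarith)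
      (by positivity) (by positivity) (mul_div_assoc δ _ l).ge G)
  exact ⟨(ENNReal.ofReal_le_iff_le_toReal (ne_top_of_le_ne_top ENNReal.ofReal_ne_top hU)).mp hL,
    ENNReal.toReal_le_of_le_ofReal (by positivity) hU⟩
end

section
/- Let X₁,…,X_G be i.i.d. with E[X₁²] = 1 and |X₁| having full support on (0,∞), let M = max_i |X_i|, and let quantization with dead zone δ ∈ (0,1) produce X̂₁ = 0 when |X₁| < δM and satisfy |X₁ − X̂₁| ≤ |X₁| always. Then lim_{G→∞} E[(X₁ − X̂₁)²] = 1 for the Laplace model (exponential magnitudes), i.e. the per-element MSE tends to the variance of X₁. -/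
/-!
Since `|X₁|` has unbounded support and the `X_i` are independent, almost surely
`M = max_{i ≤ G} |X_i| → ∞`, so for almost every outcome `X₁` eventually falls in the dead zone
`|X₁| < δ M`, where `X̂₁ = 0` and the squared error equals `X₁²`. The errors are dominated by the
integrable `X₁²`, and dominated convergence gives `E[(X₁ - X̂₁)²] → E[X₁²] = 1`.
-/

open MeasureTheory ProbabilityTheory Filter

namespace ProbabilityTheory

variable {Ω : Type*} [MeasurableSpace Ω] {μ : Measure Ω}

theorem iIndepFun.measure_iInter_preimage_eq_zero [IsFiniteMeasure μ] {β : Type*}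
    [MeasurableSpace β] {X : ℕ → Ω → β} (hX : iIndepFun X μ) {s : Set β}
    (hs : MeasurableSet s) {r : ENNReal} (hr : r < 1) (h : ∀ i, μ (X i ⁻¹' s) ≤ r) :
    μ (⋂ i, X i ⁻¹' s) = 0 := by
  have h_pow (n : ℕ) : μ (⋂ i, X i ⁻¹' s) ≤ r ^ n :=
    calc μ (⋂ i, X i ⁻¹' s) ≤ μ (⋂ i ∈ Finset.range n, X i ⁻¹' s) :=
          measure_mono fun ω hω => Set.mem_iInter₂.mpr fun i _ => Set.mem_iInter.mp hω i
      _ = ∏ i ∈ Finset.range n, μ (X i ⁻¹' s) :=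
          hX.measure_inter_preimage_eq_mul _ fun _ _ => hs
      _ ≤ r ^ n := by
          simpa using Finset.prod_le_pow_card (Finset.range n) _ _ fun i _ => h i
  exact le_zero_iff.mp (ge_of_tendsto' (ENNReal.tendsto_pow_atTop_nhds_zero_of_lt_one hr) h_pow)

theorem iIndepFun.ae_not_bddAbove [IsFiniteMeasure μ] {Y : ℕ → Ω → ℝ} (hY : iIndepFun Y μ)
    (h : ∀ K : ℝ, 0 ≤ K → ∃ r < 1, ∀ i, μ {ω | Y i ω ≤ K} ≤ r) :
    ∀ᵐ ω ∂μ, ¬ BddAbove (Set.range fun i => Y i ω) := by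
  have h_null : μ (⋃ K : ℕ, ⋂ i, Y i ⁻¹' Set.Iic (K : ℝ)) = 0 := by
    refine measure_iUnion_null fun K => ?_
    obtain ⟨r, hr, hle⟩ := h K K.cast_nonneg
    exact hY.measure_iInter_preimage_eq_zero measurableSet_Iic hr hle
  refine measure_mono_null (fun ω hω => ?_) h_null
  obtain ⟨b, hb⟩ := not_not.mp hω
  obtain ⟨K, hK⟩ := exists_nat_ge b
  exact Set.mem_iUnion.mpr ⟨K, Set.mem_iInter.mpr fun i => (hb ⟨i, rfl⟩).trans hK⟩

end ProbabilityTheory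

theorem tendsto_sup'_range_atTop_of_not_bddAbove {α : Type*} [LinearOrder α] {a : ℕ → α}
    (ha : ¬ BddAbove (Set.range a)) :
    Tendsto (fun n => (Finset.range (n + 1)).sup' Finset.nonempty_range_add_one a)
      atTop atTop := by
  refine tendsto_atTop_atTop_of_monotone
    (fun m n hmn => Finset.sup'_mono _ (Finset.range_subset_range.mpr (by omega)) _)
    fun b => ?_
  obtain ⟨_, ⟨i, rfl⟩, hi⟩ := not_bddAbove_iff.mp ha b
  exact ⟨i, hi.le.trans (Finset.le_sup' a (Finset.self_mem_range_succ i))⟩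

theorem MeasureTheory.tendsto_integral_of_eventually_eq_of_norm_le {α E ι : Type*}
    [MeasurableSpace α] {μ : Measure α} [NormedAddCommGroup E] [NormedSpace ℝ E]
    {l : Filter ι} [l.IsCountablyGenerated] {F : ι → α → E} {f : α → E}
    (hF : ∀ n, AEStronglyMeasurable (F n) μ) (hf : Integrable f μ)
    (h_le : ∀ n, ∀ᵐ ω ∂μ, ‖F n ω‖ ≤ ‖f ω‖) (h_eq : ∀ᵐ ω ∂μ, ∀ᶠ n in l, F n ω = f ω) :
    Tendsto (fun n => ∫ ω, F n ω ∂μ) l (nhds (∫ ω, f ω ∂μ)) :=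
  tendsto_integral_filter_of_dominated_convergence _ (Eventually.of_forall hF)
    (Eventually.of_forall h_le) hf.norm
    (h_eq.mono fun _ hω => tendsto_const_nhds.congr' (hω.mono fun _ h => h.symm))

theorem stmt_6_general {Ω : Type*} [MeasurableSpace Ω] (μ : Measure Ω) [IsProbabilityMeasure μ]
    (X : ℕ → Ω → ℝ) (Xhat : ℕ → Ω → ℝ) (l δ : ℝ)
    (hδ : δ ∈ Set.Ioo (0 : ℝ) 1)
    (hmeas : ∀ i, Measurable (X i)) (hmeasQ : ∀ G, Measurable (Xhat G))
    (hindep : iIndepFun X μ)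
    (hsec : ∫ ω, (X 0 ω) ^ 2 ∂μ = 1)
    (hcdf : ∀ i, ∀ z : ℝ, 0 ≤ z →
      μ {ω | |X i ω| ≤ z} = ENNReal.ofReal (1 - Real.exp (-l * z)))
    (hdead : ∀ G : ℕ, ∀ ω,
      |X 0 ω| < δ * (Finset.range (G + 1)).sup' Finset.nonempty_range_add_one
          (fun i => |X i ω|) → Xhat G ω = 0)
    (hbd : ∀ G ω, |X 0 ω - Xhat G ω| ≤ |X 0 ω|) :
    Tendsto (fun G : ℕ => ∫ ω, (X 0 ω - Xhat G ω) ^ 2 ∂μ) atTop (nhds 1) := by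
  have h_int : Integrable (fun ω => X 0 ω ^ 2) μ :=
    Integrable.of_integral_ne_zero (by rw [hsec]; exact one_ne_zero)
  have h_unbdd : ∀ᵐ ω ∂μ, ¬ BddAbove (Set.range fun i => |X i ω|) :=
    (hindep.comp (fun _ => abs) fun _ => measurable_abs).ae_not_bddAbove fun K hK =>
      ⟨_, ENNReal.ofReal_lt_one.mpr (by linarith [Real.exp_pos (-l * K)]),
        fun i => (hcdf i K hK).le⟩
  have h_dead : ∀ᵐ ω ∂μ, ∀ᶠ G in atTop, (X 0 ω - Xhat G ω) ^ 2 = X 0 ω ^ 2 := by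
    filter_upwards [h_unbdd] with ω hω
    filter_upwards [((tendsto_sup'_range_atTop_of_not_bddAbove hω).const_mul_atTop
      hδ.1).eventually_gt_atTop |X 0 ω|] with G hG
    rw [hdead G ω hG, sub_zero]
  have h_le (G : ℕ) : ∀ᵐ ω ∂μ, ‖(X 0 ω - Xhat G ω) ^ 2‖ ≤ ‖X 0 ω ^ 2‖ :=
    ae_of_all _ fun ω => by
      simpa only [norm_pow, Real.norm_eq_abs] using pow_le_pow_left₀ (abs_nonneg _) (hbd G ω) 2
  simpa only [hsec] using tendsto_integral_of_eventually_eq_of_norm_le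
    (fun G => by fun_prop) h_int h_le h_dead

/-- In the Laplace model (i.i.d. exponential magnitudes, unit second moment), a dead-zone
quantizer whose error never exceeds the magnitude of the element satisfies
`E[(X₁ - X̂₁)²] → 1` as the block size grows. -/
theorem stmt_6 {Ω : Type*} [MeasurableSpace Ω] (μ : Measure Ω) [IsProbabilityMeasure μ]
    (X : ℕ → Ω → ℝ) (Xhat : ℕ → Ω → ℝ) (l δ : ℝ) (hl : 0 < l)
    (hδ : δ ∈ Set.Ioo (0 : ℝ) 1)
    (hmeas : ∀ i, Measurable (X i)) (hmeasQ : ∀ G, Measurable (Xhat G))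
    (hindep : iIndepFun X μ)
    (hident : ∀ i, Measure.map (X i) μ = Measure.map (X 0) μ)
    (hsec : ∫ ω, (X 0 ω) ^ 2 ∂μ = 1)
    (hcdf : ∀ i, ∀ z : ℝ, 0 ≤ z →
      μ {ω | |X i ω| ≤ z} = ENNReal.ofReal (1 - Real.exp (-l * z)))
    (hdead : ∀ G : ℕ, ∀ ω,
      |X 0 ω| < δ * (Finset.range (G + 1)).sup' Finset.nonempty_range_add_one
          (fun i => |X i ω|) → Xhat G ω = 0)
    (hbd : ∀ G ω, |X 0 ω - Xhat G ω| ≤ |X 0 ω|) :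
    Tendsto (fun G : ℕ => ∫ ω, (X 0 ω - Xhat G ω) ^ 2 ∂μ) atTop (nhds 1) :=
  stmt_6_general μ X Xhat l δ hδ hmeas hmeasQ hindep hsec hcdf hdead hbd
end

section
/- Let Q: ℝ₊ → ℝ₊ satisfy Q(x·2^k) = 2^k Q(x) for all integers k, and let X be a random variable with density f supported on [2^a, 2^b] for integers a < b. Suppose |f(x) − f(y)| ≤ α whenever y ∈ [x/√2, x·√2], and (x − Q(x))²/x² ≤ M for all x. Then E[(X − Q(X))²/X²] = ∫₁² (x − Q(x))²/x² dx · Σ_{i=a}^{b−1} 2^i f(2^i) + O((2^b − 2^a)·M·α). -/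
open MeasureTheory Set

/-!
The relative error `g x = (x - Q x)² / x²` is invariant under `x ↦ 2ᵏ x`, so folding the
dyadic blocks of `[2^a, 2^b]` onto `[1, 2]` turns `∫ g f` into `∫₁² g(z) F(z) dz`, where
`F z = dyadicSum f a b z = ∑ᵢ 2ⁱ f (2ⁱ z)`. The smoothness of `f` keeps `F z` within
`2α(2^b - 2^a)` of `F 1`, the discretized density, and `|g| ≤ M` finishes the estimate.

Neither `f` nor `Q` is assumed measurable. If `g` is not a.e.-measurable on `[1, 2]`, either
`4α(2^b - 2^a) ≥ 1` and the trivial bound `|∫ g f| ≤ M` suffices, or `F > 0` on `[1, 2]`;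
then `g = (folded g f) / F` there, so `g f` is not integrable either and both integrals vanish.
-/

noncomputable def dyadicSum (φ : ℝ → ℝ) (a b : ℤ) (z : ℝ) : ℝ :=
  ∑ i ∈ Finset.Icc a (b - 1), (2 : ℝ) ^ i * φ (2 ^ i * z)

lemma dyadicSum_add_one (φ : ℝ → ℝ) {a b : ℤ} (hab : a ≤ b) (z : ℝ) :
    dyadicSum φ a (b + 1) z = dyadicSum φ a b z + 2 ^ b * φ (2 ^ b * z) := by
  rw [dyadicSum, dyadicSum, add_sub_cancel_right, ← Finset.insert_Icc_sub_one_right_eq_Icc hab,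
    Finset.sum_insert (by simp), add_comm]

lemma sum_Icc_zpow_two {a b : ℤ} (hab : a ≤ b) :
    ∑ i ∈ Finset.Icc a (b - 1), (2 : ℝ) ^ i = 2 ^ b - 2 ^ a := by
  induction b, hab using Int.leInduction with
  | base => simp
  | succ b hab ih =>
    rw [add_sub_cancel_right, ← Finset.insert_Icc_sub_one_right_eq_Icc hab,
      Finset.sum_insert (by simp), ih, zpow_add_one₀ two_ne_zero]
    ring

lemma intervalIntegrable_dyadicSum {φ : ℝ → ℝ} (hφ : Integrable φ) (a b : ℤ) (s t : ℝ) :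
    IntervalIntegrable (dyadicSum φ a b) volume s t := by
  have h : dyadicSum φ a b =
      ∑ i ∈ Finset.Icc a (b - 1), fun z => (2 : ℝ) ^ i * φ (2 ^ i * z) := by
    ext z
    simp [dyadicSum]
  rw [h]
  exact IntervalIntegrable.sum _ fun i _ =>
    ((hφ.comp_mul_left' (zpow_ne_zero i two_ne_zero)).intervalIntegrable).const_mul _

lemma intervalIntegral_zpow_two_eq_integral_dyadicSum {φ : ℝ → ℝ} (hφ : Integrable φ)
    {a b : ℤ} (hab : a ≤ b) :
    ∫ x in (2 : ℝ) ^ a..2 ^ b, φ x = ∫ z in (1 : ℝ)..2, dyadicSum φ a b z := by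
  induction b, hab using Int.leInduction with
  | base => simp [dyadicSum]
  | succ b hab ih =>
    have hscale : ∫ x in (2 : ℝ) ^ b..2 ^ (b + 1), φ x =
        2 ^ b * ∫ z in (1 : ℝ)..2, φ (2 ^ b * z) := by
      rw [← smul_eq_mul, intervalIntegral.smul_integral_comp_mul_left, mul_one,
        zpow_add_one₀ two_ne_zero]
    simp_rw [dyadicSum_add_one φ hab]
    rw [← intervalIntegral.integral_add_adjacent_intervals hφ.intervalIntegrable
      hφ.intervalIntegrable, ih, hscale, intervalIntegral.integral_add
      (intervalIntegrable_dyadicSum hφ a b 1 2)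
      ((hφ.comp_mul_left' (zpow_ne_zero b two_ne_zero)).intervalIntegrable.const_mul _),
      intervalIntegral.integral_const_mul]

lemma aemeasurable_dyadicSum {φ : ℝ → ℝ} (hφ : AEMeasurable φ) (a b : ℤ) :
    AEMeasurable (dyadicSum φ a b) :=
  Finset.aemeasurable_fun_sum _ fun i _ => (hφ.comp_quasiMeasurePreserving
    (Measure.quasiMeasurePreserving_smul volume (zpow_ne_zero i two_ne_zero))).const_mul _

lemma dyadicSum_mul_of_zpow_invariant {g : ℝ → ℝ}
    (hg : ∀ x, 0 < x → ∀ k : ℤ, g (2 ^ k * x) = g x) (f : ℝ → ℝ) (a b : ℤ) {z : ℝ}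
    (hz : 0 < z) :
    dyadicSum (fun x => g x * f x) a b z = g z * dyadicSum f a b z := by
  rw [dyadicSum, dyadicSum, Finset.mul_sum]
  exact Finset.sum_congr rfl fun i _ => by rw [hg z hz]; ring

lemma aemeasurable_restrict_Ioi_of_zpow_invariant {g : ℝ → ℝ}
    (hg : ∀ x, 0 < x → ∀ k : ℤ, g (2 ^ k * x) = g x)
    (hgm : AEMeasurable g (volume.restrict (Icc 1 2))) :
    AEMeasurable g (volume.restrict (Ioi 0)) := by
  have hcover : Ioi (0 : ℝ) ⊆ ⋃ i : ℤ, (fun x => (2 : ℝ) ^ (-i) * x) ⁻¹' Icc 1 2 := by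
    intro x hx
    obtain ⟨n, hn⟩ := exists_mem_Ico_zpow (mem_Ioi.1 hx) one_lt_two
    have h2n : (0 : ℝ) < 2 ^ n := zpow_pos two_pos n
    refine mem_iUnion.2 ⟨n, ?_, ?_⟩
    · dsimp only
      rw [zpow_neg, ← div_eq_inv_mul, le_div_iff₀ h2n, one_mul]
      exact hn.1
    · dsimp only
      rw [zpow_neg, ← div_eq_inv_mul, div_le_iff₀ h2n, mul_comm, ← zpow_add_one₀ two_ne_zero]
      exact hn.2.le
  refine (aemeasurable_iUnion_iff.2 fun i => ?_).mono_measure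
    (Measure.restrict_mono hcover le_rfl)
  have hmeas : MeasurableSet ((fun x => (2 : ℝ) ^ (-i) * x) ⁻¹' Icc 1 2) :=
    measurableSet_Icc.preimage (measurable_const_mul _)
  refine (hgm.comp_quasiMeasurePreserving ((Measure.quasiMeasurePreserving_smul volume
    (zpow_ne_zero (-i) two_ne_zero)).restrict (mapsTo_preimage _ _))).congr
    (ae_restrict_of_forall_mem hmeas fun x hx => ?_)
  have hx0 : 0 < (2 : ℝ) ^ (-i) * x := one_pos.trans_le hx.1
  have h := hg _ hx0 i
  rw [← mul_assoc, ← zpow_add₀ two_ne_zero, add_neg_cancel, zpow_zero, one_mul] at h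
  exact h.symm

lemma aemeasurable_restrict_Icc_of_mul {g f : ℝ → ℝ}
    (hg : ∀ x, 0 < x → ∀ k : ℤ, g (2 ^ k * x) = g x) (hf : AEMeasurable f)
    (hgf : AEMeasurable (fun x => g x * f x)) {a b : ℤ}
    (hF : ∀ z ∈ Icc (1 : ℝ) 2, dyadicSum f a b z ≠ 0) :
    AEMeasurable g (volume.restrict (Icc 1 2)) := by
  refine ((aemeasurable_dyadicSum hgf a b).div (aemeasurable_dyadicSum hf a b)).restrict.congr
    (ae_restrict_of_forall_mem measurableSet_Icc fun z hz => ?_)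
  rw [Pi.div_apply, dyadicSum_mul_of_zpow_invariant hg f a b (one_pos.trans_le hz.1),
    mul_div_cancel_right₀ _ (hF z hz)]

lemma MeasureTheory.Integrable.bdd_mul_of_support_subset {α : Type*} [MeasurableSpace α]
    {μ : Measure α} {f g : α → ℝ} {s : Set α} {C : ℝ} (hf : Integrable f μ) (hs : MeasurableSet s)
    (hfs : Function.support f ⊆ s) (hg : AEStronglyMeasurable g (μ.restrict s))
    (hgC : ∀ x ∈ s, ‖g x‖ ≤ C) : Integrable (fun x => g x * f x) μ := by
  rw [← indicator_eq_self.2 ((Function.support_mul_subset_right g f).trans hfs),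
    integrable_indicator_iff hs]
  exact hf.integrableOn.bdd_mul hg (ae_restrict_of_forall_mem hs hgC)

lemma abs_integral_mul_le_of_integral_eq_one {α : Type*} [MeasurableSpace α] {μ : Measure α}
    {f g : α → ℝ} {M : ℝ} (hf0 : ∀ x, 0 ≤ f x) (hf1 : ∫ x, f x ∂μ = 1)
    (hgM : ∀ x, f x ≠ 0 → |g x| ≤ M) : |∫ x, g x * f x ∂μ| ≤ M := by
  have hf : Integrable f μ := Integrable.of_integral_ne_zero (by rw [hf1]; exact one_ne_zero)
  have hbound : ∀ x, ‖g x * f x‖ ≤ M * f x := fun x => by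
    rw [Real.norm_eq_abs, abs_mul, abs_of_nonneg (hf0 x)]
    by_cases hx : f x = 0
    · simp [hx]
    · exact mul_le_mul_of_nonneg_right (hgM x hx) (hf0 x)
  calc |∫ x, g x * f x ∂μ| ≤ ∫ x, M * f x ∂μ :=
        norm_integral_le_of_norm_le (hf.const_mul M) (ae_of_all _ hbound)
    _ = M := by rw [integral_const_mul, hf1, mul_one]

lemma abs_sub_le_two_mul_of_mem_Icc {f : ℝ → ℝ} {s : Set ℝ} {α c y y' : ℝ}
    (hsmooth : ∀ x y, x ∈ s → y ∈ Icc (x / √2) (x * √2) → |f x - f y| ≤ α)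
    (hc : c * √2 ∈ s) (hy : y ∈ Icc c (2 * c)) (hy' : y' ∈ Icc c (2 * c)) :
    |f y - f y'| ≤ 2 * α := by
  have hwindow : Icc (c * √2 / √2) (c * √2 * √2) = Icc c (2 * c) := by
    rw [mul_div_cancel_right₀ _ (by positivity), mul_assoc, Real.mul_self_sqrt zero_le_two,
      mul_comm]
  rw [← hwindow] at hy hy'
  linarith [abs_sub_le (f y) (f (c * √2)) (f y'), abs_sub_comm (f y) (f (c * √2)),
    hsmooth _ _ hc hy, hsmooth _ _ hc hy']

lemma abs_dyadicSum_sub_dyadicSum_one_le {f : ℝ → ℝ} {a b : ℤ} {α : ℝ} (hab : a ≤ b)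
    (hsmooth : ∀ x y : ℝ, x ∈ Icc ((2 : ℝ) ^ a) (2 ^ b) →
      y ∈ Icc (x / √2) (x * √2) → |f x - f y| ≤ α)
    {z : ℝ} (hz : z ∈ Icc (1 : ℝ) 2) :
    |dyadicSum f a b z - dyadicSum f a b 1| ≤ 2 * α * (2 ^ b - 2 ^ a) := by
  rw [dyadicSum, dyadicSum, ← Finset.sum_sub_distrib, ← sum_Icc_zpow_two hab, Finset.mul_sum]
  refine (Finset.abs_sum_le_sum_abs _ _).trans (Finset.sum_le_sum fun i hi => ?_)
  rw [Finset.mem_Icc] at hi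
  have h2i : (0 : ℝ) < 2 ^ i := zpow_pos two_pos i
  have hsqrt : √2 ≤ 2 := Real.sqrt_le_iff.2 ⟨zero_le_two, by norm_num⟩
  have hcenter : (2 : ℝ) ^ i * √2 ∈ Icc ((2 : ℝ) ^ a) (2 ^ b) := by
    constructor
    · exact (zpow_le_zpow_right₀ one_le_two hi.1).trans
        (le_mul_of_one_le_right h2i.le (Real.one_le_sqrt.2 one_le_two))
    · calc (2 : ℝ) ^ i * √2 ≤ 2 ^ i * 2 := mul_le_mul_of_nonneg_left hsqrt h2i.le
        _ = 2 ^ (i + 1) := (zpow_add_one₀ two_ne_zero i).symm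
        _ ≤ 2 ^ b := zpow_le_zpow_right₀ one_le_two (by omega)
  have hmem : ∀ t ∈ Icc (1 : ℝ) 2, (2 : ℝ) ^ i * t ∈ Icc (2 ^ i) (2 * 2 ^ i) := fun t ht =>
    ⟨le_mul_of_one_le_right h2i.le ht.1, by nlinarith [ht.2]⟩
  rw [← mul_sub, abs_mul, abs_of_pos h2i, mul_comm (2 * α)]
  exact mul_le_mul_of_nonneg_left (abs_sub_le_two_mul_of_mem_Icc hsmooth hcenter (hmem z hz)
    (hmem 1 ⟨le_rfl, one_le_two⟩)) h2i.le

lemma abs_integral_mul_sub_le {g f : ℝ → ℝ} {a b : ℤ} {M ε : ℝ} (hab : a ≤ b)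
    (hg : ∀ x, 0 < x → ∀ k : ℤ, g (2 ^ k * x) = g x)
    (hgm : AEMeasurable g (volume.restrict (Icc 1 2))) (hgM : ∀ x, 0 < x → |g x| ≤ M)
    (hf : Integrable f) (hsupp : ∀ x, x ∉ Icc ((2 : ℝ) ^ a) (2 ^ b) → f x = 0)
    (hF : ∀ z ∈ Icc (1 : ℝ) 2, |dyadicSum f a b z - dyadicSum f a b 1| ≤ ε) :
    |(∫ x, g x * f x) - (∫ x in Icc (1 : ℝ) 2, g x) * dyadicSum f a b 1| ≤ M * ε := by
  have hM : 0 ≤ M := (abs_nonneg _).trans (hgM 1 one_pos)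
  have hsupp_pos : Function.support f ⊆ Ioi 0 := fun x hx =>
    (zpow_pos two_pos a).trans_le (not_not.1 (mt (hsupp x) hx)).1
  have hgf : Integrable (fun x => g x * f x) :=
    hf.bdd_mul_of_support_subset measurableSet_Ioi hsupp_pos
      (aemeasurable_restrict_Ioi_of_zpow_invariant hg hgm).aestronglyMeasurable
      fun x hx => (Real.norm_eq_abs _).trans_le (hgM x hx)
  have hgF : EqOn (dyadicSum (fun x => g x * f x) a b) (fun z => g z * dyadicSum f a b z)
      (uIcc 1 2) := fun z hz =>
    dyadicSum_mul_of_zpow_invariant hg f a b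
      (one_pos.trans_le (uIcc_of_le (one_le_two (α := ℝ)) ▸ hz).1)
  have hE : ∫ x, g x * f x = ∫ z in (1 : ℝ)..2, g z * dyadicSum f a b z := by
    rw [← setIntegral_eq_integral_of_forall_compl_eq_zero (s := Icc ((2 : ℝ) ^ a) (2 ^ b))
        fun x hx => by rw [hsupp x hx, mul_zero],
      integral_Icc_eq_integral_Ioc, ← intervalIntegral.integral_of_le
        (zpow_le_zpow_right₀ one_le_two hab),
      intervalIntegral_zpow_two_eq_integral_dyadicSum hgf hab]
    exact intervalIntegral.integral_congr hgF
  have hgF_int : IntervalIntegrable (fun z => g z * dyadicSum f a b z) volume 1 2 :=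
    (intervalIntegrable_congr (hgF.mono uIoc_subset_uIcc)).1
      (intervalIntegrable_dyadicSum hgf a b 1 2)
  have hg_int : IntervalIntegrable g volume 1 2 := by
    refine intervalIntegrable_const.mono_fun' (hgm.mono_measure ?_).aestronglyMeasurable
      (ae_restrict_of_forall_mem measurableSet_uIoc fun x hx => hgM x ?_)
    · rw [uIoc_of_le one_le_two]; exact Measure.restrict_mono Ioc_subset_Icc_self le_rfl
    · rw [uIoc_of_le one_le_two] at hx; exact one_pos.trans hx.1
  rw [hE, integral_Icc_eq_integral_Ioc, ← intervalIntegral.integral_of_le one_le_two,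
    ← intervalIntegral.integral_mul_const, ← intervalIntegral.integral_sub hgF_int
      (hg_int.mul_const _), ← Real.norm_eq_abs]
  calc _ ≤ M * ε * |(2 : ℝ) - 1| :=
        intervalIntegral.norm_integral_le_of_norm_le_const fun z hz => ?_
    _ = M * ε := by norm_num
  rw [uIoc_of_le one_le_two] at hz
  rw [← mul_sub, Real.norm_eq_abs, abs_mul]
  exact mul_le_mul (hgM z (one_pos.trans hz.1)) (hF z (Ioc_subset_Icc_self hz)) (abs_nonneg _)
    hM

lemma dyadicSum_pos {f : ℝ → ℝ} {a b : ℤ} {ε : ℝ} (hab : a ≤ b) (hf : Integrable f)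
    (hf1 : ∫ x, f x = 1) (hsupp : ∀ x, x ∉ Icc ((2 : ℝ) ^ a) (2 ^ b) → f x = 0)
    (hF : ∀ z ∈ Icc (1 : ℝ) 2, |dyadicSum f a b z - dyadicSum f a b 1| ≤ ε) (hε : 2 * ε < 1)
    {z : ℝ} (hz : z ∈ Icc (1 : ℝ) 2) : 0 < dyadicSum f a b z := by
  -- for `g = 1` the estimate reads `|1 - F 1| ≤ ε`
  have h1 := abs_integral_mul_sub_le (g := fun _ => 1) (M := 1) hab (fun _ _ _ => rfl)
    aemeasurable_const (fun _ _ => by simp) hf hsupp hF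
  simp only [one_mul, hf1, setIntegral_const, Real.volume_real_Icc_of_le one_le_two] at h1
  norm_num at h1
  have h2 := hF z hz
  rw [abs_le] at h1 h2
  linarith [h1.1, h2.1]

/-- Consistency of the relative quantization error for smooth densities: the expected
relative squared error equals the base profile integral on `[1,2]` weighted by the
discretized density, up to a remainder `O((2^b - 2^a) · M · α)` with an absolute constant. -/
theorem stmt_9 :
    ∃ C : ℝ, 0 < C ∧
      ∀ (Q f : ℝ → ℝ) (a b : ℤ) (α M : ℝ), a < b →
        (∀ x : ℝ, 0 < x → ∀ k : ℤ, Q (x * 2 ^ k) = 2 ^ k * Q x) →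
        (∀ x, 0 ≤ f x) →
        (∀ x, x ∉ Set.Icc ((2 : ℝ) ^ a) ((2 : ℝ) ^ b) → f x = 0) →
        (∫ x, f x) = 1 →
        (∀ x y : ℝ, x ∈ Set.Icc ((2 : ℝ) ^ a) ((2 : ℝ) ^ b) →
          y ∈ Set.Icc (x / Real.sqrt 2) (x * Real.sqrt 2) → |f x - f y| ≤ α) →
        (∀ x : ℝ, 0 < x → (x - Q x) ^ 2 / x ^ 2 ≤ M) →
        |(∫ x, (x - Q x) ^ 2 / x ^ 2 * f x) -
            (∫ x in Set.Icc (1 : ℝ) 2, (x - Q x) ^ 2 / x ^ 2) *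
              ∑ i ∈ Finset.Icc a (b - 1), (2 : ℝ) ^ i * f ((2 : ℝ) ^ i)| ≤
          C * ((2 : ℝ) ^ b - (2 : ℝ) ^ a) * M * α := by
  refine ⟨4, four_pos, fun Q f a b α M hab hQ hf0 hsupp hf1 hsmooth hM => ?_⟩
  set g : ℝ → ℝ := fun x => (x - Q x) ^ 2 / x ^ 2 with hg_def
  have hg : ∀ x, 0 < x → ∀ k : ℤ, g (2 ^ k * x) = g x := fun x hx k => by
    have h2k : (2 : ℝ) ^ k ≠ 0 := zpow_ne_zero k two_ne_zero
    simp only [hg_def, mul_comm _ x, hQ x hx k]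
    field_simp
  have hgM : ∀ x, 0 < x → |g x| ≤ M := fun x hx =>
    (abs_of_nonneg (by positivity)).trans_le (hM x hx)
  have hM0 : 0 ≤ M := (abs_nonneg _).trans (hgM 1 one_pos)
  have hD : (0 : ℝ) < 2 ^ b - 2 ^ a := sub_pos.2 (zpow_lt_zpow_right₀ one_lt_two hab)
  have hα : 0 ≤ α := by
    have h2a : (0 : ℝ) < 2 ^ a := zpow_pos two_pos a
    have hsqrt : 1 ≤ √2 := Real.one_le_sqrt.2 one_le_two
    simpa using hsmooth _ _ ⟨le_rfl, sub_nonneg.1 hD.le⟩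
      ⟨div_le_self h2a.le hsqrt, le_mul_of_one_le_right h2a.le hsqrt⟩
  have hf : Integrable f := Integrable.of_integral_ne_zero (by rw [hf1]; exact one_ne_zero)
  have hF := fun z (hz : z ∈ Icc (1 : ℝ) 2) =>
    abs_dyadicSum_sub_dyadicSum_one_le hab.le hsmooth hz
  have hS : ∑ i ∈ Finset.Icc a (b - 1), (2 : ℝ) ^ i * f (2 ^ i) = dyadicSum f a b 1 := by
    simp [dyadicSum]
  rw [hS]
  by_cases hgm : AEMeasurable g (volume.restrict (Icc 1 2))
  · calc _ ≤ M * (2 * α * (2 ^ b - 2 ^ a)) :=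
          abs_integral_mul_sub_le hab.le hg hgm hgM hf hsupp hF
      _ ≤ 4 * (2 ^ b - 2 ^ a) * M * α := by nlinarith [mul_nonneg (mul_nonneg hM0 hα) hD.le]
  rw [integral_undef fun h => hgm h.aemeasurable, zero_mul, sub_zero]
  by_cases hαD : 1 ≤ 4 * α * (2 ^ b - 2 ^ a)
  · calc _ ≤ M := abs_integral_mul_le_of_integral_eq_one hf0 hf1 fun x hx =>
          hgM x ((zpow_pos two_pos a).trans_le (not_not.1 (mt (hsupp x) hx)).1)
      _ ≤ 4 * (2 ^ b - 2 ^ a) * M * α := by nlinarith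
  rw [integral_undef fun h => hgm (aemeasurable_restrict_Icc_of_mul hg hf.aemeasurable
    h.aemeasurable fun z hz => (dyadicSum_pos hab.le hf hf1 hsupp hF (by linarith) hz).ne'),
    abs_zero]
  positivity
end
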